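/- For every q ∈ [0,1], every N ≥ 2 and every finite sequence of indices i_1, …, i_n ∈ {1, …, N−1}, the probability measure (π_{i_n} ∘ ⋯ ∘ π_{i_1})(δ_id) on S_N (obtained by applying π_{i_1} first and π_{i_n} last to the point mass at the identity permutation) equals the pushforward under the inversion map x ↦ x⁻¹ of the probability measure (π_{i_1} ∘ ⋯ ∘ π_{i_n})(δ_id) obtained by applying the same operators in the reverse order. -/

import Mathlib

open MeasureTheory
open scoped NNReal

/-- Equip the finite symmetric group `S_N` with the discrete (full) σ-algebra. -/
instance (N : ℕ) : MeasurableSpace (Equiv.Perm (Fin N)) := ⊤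

/-- The adjacent transposition `s_i` of `{1, …, N}` exchanging `i` and `i+1`
(for `1 ≤ i ≤ N−1`; positions in `Fin N` are 0-indexed, so `s_i` swaps the
0-indexed positions `i−1` and `i`). -/
def adjT (N : ℕ) (i : {i : ℕ // 1 ≤ i ∧ i < N}) : Equiv.Perm (Fin N) :=
  Equiv.swap ⟨i.1 - 1, by omega⟩ ⟨i.1, i.2.2⟩

/-- The operator `τ_i : η ↦ η ∘ s_i`, exchanging the entries in positions
`i` and `i+1`. -/
def tauP (N : ℕ) (i : {i : ℕ // 1 ≤ i ∧ i < N}) (η : Equiv.Perm (Fin N)) :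
    Equiv.Perm (Fin N) :=
  η * adjT N i

/-- The operator `σ_i : η ↦ η ∘ s_i` if `η(i) < η(i+1)` and `η ↦ η` otherwise,
sorting positions `i`, `i+1` into decreasing order. -/
def sigmaP (N : ℕ) (i : {i : ℕ // 1 ≤ i ∧ i < N}) (η : Equiv.Perm (Fin N)) :
    Equiv.Perm (Fin N) :=
  if η ⟨i.1 - 1, by omega⟩ < η ⟨i.1, i.2.2⟩ then η * adjT N i else η

/-- The Markov operator `π_i ν = q·(τ_i)_*ν + (1−q)·(σ_i)_*ν` on measures
on `S_N`. -/
noncomputable def piP (N : ℕ) (q : ℝ≥0) (i : {i : ℕ // 1 ≤ i ∧ i < N})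
    (ν : Measure (Equiv.Perm (Fin N))) : Measure (Equiv.Perm (Fin N)) :=
  q • ν.map (tauP N i) + (1 - q) • ν.map (sigmaP N i)

/-!
Let `π'_i ν = inv_* (π_i (inv_* ν))` be the left counterpart of `π_i`: it swaps or sorts the
values `i, i+1` instead of the positions. Every left operator commutes with every right one.
Unless `s_i η = η s_j`, left multiplication by `s_i` does not change the relative order of the
entries in positions `j, j+1`, so the two sortings act independently; on the exceptional `η`
both sortings pick the same element of `{η, η s_j}` and the two mixed terms are exchanged.
Since `π_i δ_id = π'_i δ_id`, pulling each left operator out through the later right ones gives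
`π_{i_n} ⋯ π_{i_1} δ_id = π'_{i_1} ⋯ π'_{i_n} δ_id = inv_* (π_{i_1} ⋯ π_{i_n} δ_id)`.
-/

open Equiv

theorem MeasureTheory.Measure.map_add_map_eq_of_dirac_add_dirac {α β : Type*}
    [MeasurableSpace α] [MeasurableSpace β] {f g f' g' : α → β} (hf : Measurable f)
    (hg : Measurable g) (hf' : Measurable f') (hg' : Measurable g')
    (h : ∀ x, dirac (f x) + dirac (g x) = dirac (f' x) + dirac (g' x)) (ν : Measure α) :
    ν.map f + ν.map g = ν.map f' + ν.map g' := by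
  have map_apply_eq {u : α → β} (hu : Measurable u) {s : Set β} (hs : MeasurableSet s) :
      ν.map u s = ∫⁻ x, dirac (u x) s ∂ν := by
    rw [← bind_dirac_eq_map ν hu,
      bind_apply hs (f := fun x => dirac (u x)) (measurable_dirac.comp hu).aemeasurable]
  have measurable_dirac_apply {u : α → β} (hu : Measurable u) {s : Set β}
      (hs : MeasurableSet s) : Measurable fun x => dirac (u x) s :=
    (measurable_coe hs).comp (measurable_dirac.comp hu)
  ext s hs
  rw [add_apply, add_apply, map_apply_eq hf hs, map_apply_eq hg hs, map_apply_eq hf' hs,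
    map_apply_eq hg' hs, ← lintegral_add_left (measurable_dirac_apply hf hs),
    ← lintegral_add_left (measurable_dirac_apply hf' hs)]
  simp only [← add_apply, h]

theorem Equiv.swap_apply_lt_swap_apply_iff {N : ℕ} {a b x y : Fin N}
    (hab : a.val + 1 = b.val) (hxy : swap x y ≠ swap a b) :
    swap a b x < swap a b y ↔ x < y := by
  have h₁ : ¬(x = a ∧ y = b) := by rintro ⟨rfl, rfl⟩; exact hxy rfl
  have h₂ : ¬(x = b ∧ y = a) := by rintro ⟨rfl, rfl⟩; exact hxy (swap_comm _ _)
  simp only [swap_apply_def, Fin.lt_def, Fin.ext_iff] at *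
  split_ifs <;> omega

abbrev AdjIndex (N : ℕ) := {i : ℕ // 1 ≤ i ∧ i < N}

namespace AdjIndex

variable {N : ℕ}

def lo (i : AdjIndex N) : Fin N := ⟨i.1 - 1, by omega⟩

def hi (i : AdjIndex N) : Fin N := ⟨i.1, i.2.2⟩

theorem lo_val_add_one (i : AdjIndex N) : (lo i).val + 1 = (hi i).val := by
  have := i.2.1
  simp only [lo, hi]
  omega

theorem lo_lt_hi (i : AdjIndex N) : lo i < hi i := by
  rw [Fin.lt_def, ← lo_val_add_one]
  exact Nat.lt_succ_self _

end AdjIndex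

open AdjIndex

def tauL (N : ℕ) (i : AdjIndex N) (η : Perm (Fin N)) : Perm (Fin N) :=
  (tauP N i η⁻¹)⁻¹

def sigmaL (N : ℕ) (i : AdjIndex N) (η : Perm (Fin N)) : Perm (Fin N) :=
  (sigmaP N i η⁻¹)⁻¹

section Sorting

variable {N : ℕ}

theorem adjT_eq_swap (i : AdjIndex N) : adjT N i = swap (lo i) (hi i) := rfl

@[simp]
theorem adjT_inv (i : AdjIndex N) : (adjT N i)⁻¹ = adjT N i := swap_inv _ _

@[simp]
theorem mul_adjT_mul_adjT (η : Perm (Fin N)) (i : AdjIndex N) :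
    η * adjT N i * adjT N i = η := by
  rw [mul_assoc, adjT_eq_swap, swap_mul_self, mul_one]

@[simp]
theorem adjT_apply_lo (i : AdjIndex N) : adjT N i (lo i) = hi i := swap_apply_left _ _

@[simp]
theorem adjT_apply_hi (i : AdjIndex N) : adjT N i (hi i) = lo i := swap_apply_right _ _

theorem sigmaP_eq (i : AdjIndex N) (η : Perm (Fin N)) :
    sigmaP N i η = if η (lo i) < η (hi i) then η * adjT N i else η := rfl

theorem sigmaP_eq_or (i : AdjIndex N) (η : Perm (Fin N)) :
    sigmaP N i η = η ∨ sigmaP N i η = η * adjT N i := by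
  rw [sigmaP_eq]
  split_ifs
  exacts [Or.inr rfl, Or.inl rfl]

theorem sigmaP_mul_adjT (i : AdjIndex N) (η : Perm (Fin N)) :
    sigmaP N i (η * adjT N i) = sigmaP N i η := by
  have hne : η (lo i) ≠ η (hi i) := η.injective.ne (lo_lt_hi i).ne
  rcases hne.lt_or_gt with h | h <;> simp [sigmaP_eq, h, h.not_gt]

theorem sigmaP_adjT_mul_of_ne {i j : AdjIndex N} {η : Perm (Fin N)}
    (h : adjT N i * η ≠ η * adjT N j) :
    sigmaP N j (adjT N i * η) = adjT N i * sigmaP N j η := by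
  have hswap : swap (η (lo j)) (η (hi j)) ≠ swap (lo i) (hi i) := by
    rw [← adjT_eq_swap]
    intro h'
    apply h
    rw [← h', adjT_eq_swap, mul_swap_eq_swap_mul]
  have hlt : (adjT N i * η) (lo j) < (adjT N i * η) (hi j) ↔ η (lo j) < η (hi j) :=
    swap_apply_lt_swap_apply_iff (lo_val_add_one i) hswap
  simp only [sigmaP_eq, hlt]
  split_ifs <;> simp only [mul_assoc]

@[simp]
theorem tauL_apply (i : AdjIndex N) (η : Perm (Fin N)) : tauL N i η = adjT N i * η := by
  simp [tauL, tauP]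

theorem sigmaL_eq (i : AdjIndex N) (η : Perm (Fin N)) :
    sigmaL N i η = if η⁻¹ (lo i) < η⁻¹ (hi i) then adjT N i * η else η := by
  rw [sigmaL, sigmaP_eq]
  split_ifs <;> simp

theorem sigmaL_eq_or (i : AdjIndex N) (η : Perm (Fin N)) :
    sigmaL N i η = η ∨ sigmaL N i η = adjT N i * η := by
  rcases sigmaP_eq_or i η⁻¹ with h | h <;> simp [sigmaL, h]

theorem sigmaL_adjT_mul (i : AdjIndex N) (η : Perm (Fin N)) :
    sigmaL N i (adjT N i * η) = sigmaL N i η := by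
  simp [sigmaL, sigmaP_mul_adjT]

theorem sigmaL_mul_adjT_of_ne {i j : AdjIndex N} {η : Perm (Fin N)}
    (h : adjT N i * η ≠ η * adjT N j) :
    sigmaL N i (η * adjT N j) = sigmaL N i η * adjT N j := by
  have h' : adjT N j * η⁻¹ ≠ η⁻¹ * adjT N i := by
    contrapose! h
    simpa using congrArg (·⁻¹) h.symm
  simp [sigmaL, sigmaP_adjT_mul_of_ne h']

theorem apply_lo_hi_of_adjT_mul_eq {i j : AdjIndex N} {η : Perm (Fin N)}
    (h : adjT N i * η = η * adjT N j) :
    (η (lo j) = lo i ∧ η (hi j) = hi i) ∨ (η (lo j) = hi i ∧ η (hi j) = lo i) := by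
  have hhi : η (hi j) = adjT N i (η (lo j)) := by
    simpa using (DFunLike.congr_fun h (lo j)).symm
  have hne : η (lo j) ≠ η (hi j) := η.injective.ne (lo_lt_hi j).ne
  rw [hhi, adjT_eq_swap] at hne ⊢
  by_cases hlo : η (lo j) = lo i
  · simp [hlo]
  by_cases hhi' : η (lo j) = hi i
  · simp [hhi']
  exact absurd (swap_apply_of_ne_of_ne hlo hhi').symm hne

theorem sigmaL_eq_sigmaP_of_eq {i j : AdjIndex N} {η : Perm (Fin N)}
    (h : adjT N i * η = η * adjT N j) : sigmaL N i η = sigmaP N j η := by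
  have hdesc : η⁻¹ (lo i) < η⁻¹ (hi i) ↔ η (lo j) < η (hi j) := by
    rcases apply_lo_hi_of_adjT_mul_eq h with ⟨h₁, h₂⟩ | ⟨h₁, h₂⟩ <;>
      rw [← h₁, ← h₂, Perm.coe_inv, symm_apply_apply, symm_apply_apply, h₁, h₂]
    · exact iff_of_true (lo_lt_hi j) (lo_lt_hi i)
    · exact iff_of_false (lo_lt_hi j).not_gt (lo_lt_hi i).not_gt
  simp only [sigmaL_eq, sigmaP_eq, hdesc, h]

theorem tauP_tauL_comm (i j : AdjIndex N) (η : Perm (Fin N)) :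
    tauP N j (tauL N i η) = tauL N i (tauP N j η) := by
  simp [tauP, mul_assoc]

theorem sigmaP_sigmaL_comm (i j : AdjIndex N) (η : Perm (Fin N)) :
    sigmaP N j (sigmaL N i η) = sigmaL N i (sigmaP N j η) := by
  by_cases h : adjT N i * η = η * adjT N j
  · have hP : sigmaP N j (sigmaL N i η) = sigmaP N j η := by
      rcases sigmaL_eq_or i η with hL | hL <;> rw [hL]
      rw [h, sigmaP_mul_adjT]
    have hL : sigmaL N i (sigmaP N j η) = sigmaL N i η := by
      rcases sigmaP_eq_or j η with hP | hP <;> rw [hP]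
      rw [← h, sigmaL_adjT_mul]
    rw [hP, hL, sigmaL_eq_sigmaP_of_eq h]
  · rcases sigmaL_eq_or i η with hL | hL <;> rcases sigmaP_eq_or j η with hP | hP <;>
      simp only [hL, hP, sigmaP_adjT_mul_of_ne h, sigmaL_mul_adjT_of_ne h, mul_assoc]

theorem dirac_tauP_sigmaL_add_dirac_sigmaP_tauL (i j : AdjIndex N) (η : Perm (Fin N)) :
    Measure.dirac (tauP N j (sigmaL N i η)) + Measure.dirac (sigmaP N j (tauL N i η)) =
      Measure.dirac (sigmaL N i (tauP N j η)) + Measure.dirac (tauL N i (sigmaP N j η)) := by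
  simp only [tauL_apply, tauP]
  by_cases h : adjT N i * η = η * adjT N j
  · have hσ : adjT N i * sigmaP N j η = sigmaP N j η * adjT N j := by
      rcases sigmaP_eq_or j η with hP | hP <;> rw [hP]
      · exact h
      · rw [← mul_assoc, h]
    rw [h, sigmaP_mul_adjT, ← h, sigmaL_adjT_mul, sigmaL_eq_sigmaP_of_eq h, hσ, add_comm]
  · rw [sigmaP_adjT_mul_of_ne h, sigmaL_mul_adjT_of_ne h]

end Sorting

instance (N : ℕ) : DiscreteMeasurableSpace (Perm (Fin N)) := ⟨fun _ => trivial⟩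

noncomputable def piL (N : ℕ) (q : ℝ≥0) (i : AdjIndex N) (ν : Measure (Perm (Fin N))) :
    Measure (Perm (Fin N)) :=
  (piP N q i (ν.map (·⁻¹))).map (·⁻¹)

section Operators

variable {N : ℕ} (q : ℝ≥0)

theorem piL_map_inv (i : AdjIndex N) (ν : Measure (Perm (Fin N))) :
    piL N q i (ν.map (·⁻¹)) = (piP N q i ν).map (·⁻¹) := by
  rw [piL, Measure.map_map (.of_discrete) (.of_discrete)]
  simp

theorem piL_eq (i : AdjIndex N) (ν : Measure (Perm (Fin N))) :
    piL N q i ν = q • ν.map (tauL N i) + (1 - q) • ν.map (sigmaL N i) := by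
  simp only [piL, piP, Measure.map_add _ _ (.of_discrete), Measure.map_smul,
    Measure.map_map (.of_discrete) (.of_discrete)]
  rfl

theorem piP_piL_comm (i j : AdjIndex N) (ν : Measure (Perm (Fin N))) :
    piP N q j (piL N q i ν) = piL N q i (piP N q j ν) := by
  have hcross := Measure.map_add_map_eq_of_dirac_add_dirac (.of_discrete) (.of_discrete)
    (.of_discrete) (.of_discrete) (dirac_tauP_sigmaL_add_dirac_sigmaP_tauL i j) ν
  simp only [piL_eq, piP, Measure.map_add _ _ (.of_discrete), Measure.map_smul,
    Measure.map_map (.of_discrete) (.of_discrete)] at hcross ⊢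
  simp only [Function.comp_def, tauP_tauL_comm, sigmaP_sigmaL_comm]
  set A := ν.map fun x => tauP N j (sigmaL N i x)
  set B := ν.map fun x => sigmaP N j (tauL N i x)
  calc _ = (q * q) • ν.map (fun x => tauL N i (tauP N j x)) + (q * (1 - q)) • (A + B)
        + ((1 - q) * (1 - q)) • ν.map (fun x => sigmaL N i (sigmaP N j x)) := by module
    _ = _ := by
        rw [hcross]
        module

theorem piP_dirac_one (i : AdjIndex N) :
    piP N q i (Measure.dirac 1) =
      q • Measure.dirac (adjT N i) + (1 - q) • Measure.dirac (adjT N i) := by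
  simp [piP, Measure.map_dirac' (.of_discrete), tauP, sigmaP_eq, lo_lt_hi]

theorem piL_dirac_one (i : AdjIndex N) :
    piL N q i (Measure.dirac 1) = piP N q i (Measure.dirac 1) := by
  simp [piL, piP_dirac_one, Measure.map_add _ _ (.of_discrete),
    Measure.map_dirac' (.of_discrete)]

theorem foldl_piP_piL_comm (w : List (AdjIndex N)) (i : AdjIndex N)
    (ν : Measure (Perm (Fin N))) :
    w.foldl (fun ν j => piP N q j ν) (piL N q i ν) =
      piL N q i (w.foldl (fun ν j => piP N q j ν) ν) := by
  induction w generalizing ν with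
  | nil => rfl
  | cons j w ih => simp only [List.foldl_cons, piP_piL_comm, ih]

theorem foldl_piP_dirac_one_eq_foldr_piL (w : List (AdjIndex N)) :
    w.foldl (fun ν i => piP N q i ν) (Measure.dirac 1) =
      w.foldr (fun i ν => piL N q i ν) (Measure.dirac 1) := by
  induction w with
  | nil => rfl
  | cons i w ih =>
    rw [List.foldl_cons, ← piL_dirac_one, foldl_piP_piL_comm, ih, List.foldr_cons]

theorem foldr_piL_map_inv (w : List (AdjIndex N)) (ν : Measure (Perm (Fin N))) :
    w.foldr (fun i ν => piL N q i ν) (ν.map (·⁻¹)) =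
      (w.foldr (fun i ν => piP N q i ν) ν).map (·⁻¹) := by
  induction w with
  | nil => rfl
  | cons i w ih => simp only [List.foldr_cons, ih, piL_map_inv]

end Operators

theorem piP_reverse_word_inverse_general (q : ℝ≥0) (N : ℕ)
    (w : List {i : ℕ // 1 ≤ i ∧ i < N}) :
    w.foldl (fun ν i => piP N q i ν) (Measure.dirac 1) =
      Measure.map (fun x => x⁻¹)
        (w.reverse.foldl (fun ν i => piP N q i ν) (Measure.dirac 1)) := by
  have hδ : (Measure.dirac (1 : Perm (Fin N))).map (·⁻¹) = Measure.dirac 1 := by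
    rw [Measure.map_dirac' (.of_discrete), inv_one]
  rw [foldl_piP_dirac_one_eq_foldr_piL, List.foldl_reverse, ← foldr_piL_map_inv, hδ]

/-- Applying `π_{i_1}, …, π_{i_n}` in order to the point mass at the identity
(i.e. forming `(π_{i_n} ∘ ⋯ ∘ π_{i_1})(δ_id)`) yields the pushforward, under
the inversion map `x ↦ x⁻¹`, of the measure obtained by applying the same
operators in the reverse order. -/
theorem piP_reverse_word_inverse (q : ℝ≥0) (hq : q ≤ 1) (N : ℕ) (hN : 2 ≤ N)
    (w : List {i : ℕ // 1 ≤ i ∧ i < N}) :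
    w.foldl (fun ν i => piP N q i ν) (Measure.dirac 1) =
      Measure.map (fun x => x⁻¹)
        (w.reverse.foldl (fun ν i => piP N q i ν) (Measure.dirac 1)) :=
  piP_reverse_word_inverse_general q N w
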